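/- Let P be a set, let D_1, …, D_n be reduced seminormal finitely primary monoids (of ranks s_1, …, s_n), and let F = F(P) × D_1 × ⋯ × D_n, where F(P) is the free abelian monoid on P. Then c(F) = max{c(D_1), …, c(D_n)} ≤ 3, and consequently Δ(F) ⊆ {1}. -/

import Mathlib

namespace ArXivSeminormal

attribute [local instance] Classical.propDecidable

noncomputable section

/-! ### Generic factorization theory in commutative monoids -/

variable {M : Type*} [CommMonoid M]

/-- The set of factorizations of `a` (in the sense of `Z(a)`): multisets of irreducible
elements of the reduced monoid (modelled by `Associates M`) whose product is the class
of `a`. -/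
def Factorizations (a : M) : Set (Multiset (Associates M)) :=
  {z | (∀ x ∈ z, Irreducible x) ∧ z.prod = Associates.mk a}

/-- The set of lengths `L(a)` of an element `a`. -/
def lengthSet (a : M) : Set ℕ :=
  {k | ∃ z ∈ Factorizations a, Multiset.card z = k}

/-- The set of (successive) distances `Δ(L)` of a set `L ⊆ ℕ`. -/
def DeltaSet (L : Set ℕ) : Set ℕ :=
  {d | ∃ k l, k ∈ L ∧ l ∈ L ∧ k < l ∧ (∀ m, k < m → m < l → m ∉ L) ∧ d = l - k}

/-- The set of distances `Δ(H)` of a monoid `H`. -/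
def DeltaMonoid (M : Type*) [CommMonoid M] : Set ℕ :=
  ⋃ a : M, DeltaSet (lengthSet a)

/-- The distance between two factorizations:
`d(z,z') = max (card (z - gcd z z')) (card (z' - gcd z z'))`. -/
def factorDist (z z' : Multiset (Associates M)) : ℕ :=
  max (Multiset.card (z - z')) (Multiset.card (z' - z))

/-- The catenary degree `c(H)` of a monoid `H`: the smallest `N ∈ ℕ∞` such that any two
factorizations of any element are connected by a chain of factorizations with consecutive
distances at most `N`. -/
def catenaryDegree (M : Type*) [CommMonoid M] : ℕ∞ :=
  sInf {N : ℕ∞ | ∀ (a : M), ∀ z ∈ Factorizations a, ∀ z' ∈ Factorizations a,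
    ∃ c : List (Multiset (Associates M)), c.head? = some z ∧ c.getLast? = some z' ∧
      (∀ w ∈ c, w ∈ Factorizations a) ∧
      List.Chain' (fun u v => (factorDist u v : ℕ∞) ≤ N) c}

/-- A monoid is factorial if every element has a unique factorization. -/
def IsFactorialMonoid (M : Type*) [CommMonoid M] : Prop :=
  ∀ a : M, ∃! z : Multiset (Associates M), z ∈ Factorizations a

/-! ### Free commutative monoids, block monoids, Davenport constant -/

/-- The free abelian (multiplicatively written) monoid on a set `P`. -/
abbrev FreeCM (P : Type*) := Multiplicative (Multiset P)

/-- The sum homomorphism `σ : F(G) → G`. -/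
def sigmaHom (G : Type*) [AddCommMonoid G] : FreeCM G →* Multiplicative G :=
  AddMonoidHom.toMultiplicative
    { toFun := Multiset.sum
      map_zero' := Multiset.sum_zero
      map_add' := Multiset.sum_add }

/-- The monoid of zero-sum sequences over `G`. -/
def BlockMonoid (G : Type*) [AddCommMonoid G] : Submonoid (FreeCM G) :=
  MonoidHom.mker (sigmaHom G)

/-- The Davenport constant of `G`: the supremum of lengths of minimal zero-sum sequences. -/
def Davenport (G : Type*) [AddCommMonoid G] : ℕ :=
  sSup {k | ∃ u : BlockMonoid G, Irreducible u ∧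
    Multiset.card (Multiplicative.toAdd (u : FreeCM G)) = k}

/-! ### Reduced seminormal finitely primary monoids -/

/-- The `Fin s →₀ ℕ` function with all values `1`, i.e. the exponent vector of
`q_1 ⋯ q_s`. -/
def allOnes (s : ℕ) : Fin s →₀ ℕ := Finsupp.equivFunOnFinite.symm fun _ => 1

/-- The reduced seminormal finitely primary monoid of rank `s` with unit group `U` of the
complete integral closure:
`D = {ε q_1^{k_1} ⋯ q_s^{k_s} : ε ∈ U, all k_j ≥ 1} ∪ {1} ⊆ U × [q_1,…,q_s]`. -/
def seminormalD (U : Type*) [CommGroup U] (s : ℕ) :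
    Submonoid (U × Multiplicative (Fin s →₀ ℕ)) where
  carrier := {x | x = 1 ∨ ∀ j, 1 ≤ Multiplicative.toAdd x.2 j}
  one_mem' := Or.inl rfl
  mul_mem' := by
    rintro a b (rfl | ha) (rfl | hb)
    · exact Or.inl (mul_one 1)
    · rw [Set.mem_setOf_eq, one_mul]; exact Or.inr hb
    · rw [Set.mem_setOf_eq, mul_one]; exact Or.inr ha
    · refine Or.inr fun j => ?_
      have h1 := ha j
      have h2 := hb j
      have h3 : Multiplicative.toAdd ((a * b).2) j
          = Multiplicative.toAdd a.2 j + Multiplicative.toAdd b.2 j := rfl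
      omega

/-! ### T-block monoids (Setting (S)) -/

/-- The monoid `T = D_1 × ⋯ × D_n`. -/
abbrev Tm {n : ℕ} (U : Fin n → Type*) [∀ i, CommGroup (U i)] (s : Fin n → ℕ) :=
  ∀ i, ↥(seminormalD (U i) (s i))

/-- The monoid `D̂_1 × ⋯ × D̂_n`. -/
abbrev HatTm {n : ℕ} (U : Fin n → Type*) [∀ i, CommGroup (U i)] (s : Fin n → ℕ) :=
  ∀ i, U i × Multiplicative (Fin (s i) →₀ ℕ)

/-- The monoid `F = F(G) × T`. -/
abbrev Fm (G : Type*) {n : ℕ} (U : Fin n → Type*) [∀ i, CommGroup (U i)] (s : Fin n → ℕ) :=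
  FreeCM G × Tm U s

/-- The homomorphism `F → G`, `S·t ↦ σ(S) + ι(t)`, whose kernel is the `T`-block monoid;
it computes the class `[a] ∈ G ≅ q(F)/q(B)` of `a ∈ F`. -/
def TBlockPhi (G : Type*) [AddCommGroup G] {n : ℕ} (U : Fin n → Type*) [∀ i, CommGroup (U i)]
    (s : Fin n → ℕ) (iota : Tm U s →* Multiplicative G) : Fm G U s →* Multiplicative G :=
  ((sigmaHom G).comp (MonoidHom.fst _ _)) * (iota.comp (MonoidHom.snd _ _))

/-- The `T`-block monoid `B = B(G, T, ι) = {S·t ∈ F(G) × T : σ(S) + ι(t) = 0}`. -/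
def TBlock (G : Type*) [AddCommGroup G] {n : ℕ} (U : Fin n → Type*) [∀ i, CommGroup (U i)]
    (s : Fin n → ℕ) (iota : Tm U s →* Multiplicative G) : Submonoid (Fm G U s) :=
  MonoidHom.mker (TBlockPhi G U s iota)

/-- The inclusion `T = D_1 × ⋯ × D_n → D̂_1 × ⋯ × D̂_n`. -/
def embedT {n : ℕ} (U : Fin n → Type*) [∀ i, CommGroup (U i)] (s : Fin n → ℕ) :
    Tm U s →* HatTm U s :=
  Pi.monoidHom fun i => (seminormalD (U i) (s i)).subtype.comp
    (Pi.evalMonoidHom (fun j => ↥(seminormalD (U j) (s j))) i)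

/-- The norm `‖A‖ = k + 2·Σ_i max L_{D_i}(a_i)` of `A = g_1⋯g_k a_1⋯a_n ∈ F`. -/
def normF (G : Type*) {n : ℕ} (U : Fin n → Type*) [∀ i, CommGroup (U i)] (s : Fin n → ℕ)
    (A : Fm G U s) : ℕ :=
  Multiset.card (Multiplicative.toAdd A.1) + 2 * ∑ i, sSup (lengthSet (A.2 i))

/-- The class `[ε] ∈ G` of a unit `ε ∈ D̂_ν^×`. -/
def classOfUnit {G : Type*} [AddCommGroup G] {n : ℕ} (U : Fin n → Type*)
    [∀ i, CommGroup (U i)] (s : Fin n → ℕ) (iotahat : HatTm U s →* Multiplicative G)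
    (ν : Fin n) (ε : U ν) : Multiplicative G :=
  iotahat (Pi.mulSingle ν (ε, 1))

/-- The class `[q_{ν,j}] ∈ G` of the prime `q_{ν,j}` of `D̂_ν`. -/
def classOfPrime {G : Type*} [AddCommGroup G] {n : ℕ} (U : Fin n → Type*)
    [∀ i, CommGroup (U i)] (s : Fin n → ℕ) (iotahat : HatTm U s →* Multiplicative G)
    (ν : Fin n) (j : Fin (s ν)) : Multiplicative G :=
  iotahat (Pi.mulSingle ν (1, Multiplicative.ofAdd (Finsupp.single j 1)))

/-- The quantity `d_ν ∈ {-1, 0, 1, 2}` from Theorem 3.3 (for `G = {0, e}` of order two). -/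
def dval {G : Type*} [AddCommGroup G] {n : ℕ} (U : Fin n → Type*) [∀ i, CommGroup (U i)]
    (s : Fin n → ℕ) (iotahat : HatTm U s →* Multiplicative G) (e : G) (ν : Fin n) : ℤ :=
  if (∀ ε : U ν, classOfUnit U s iotahat ν ε = 1) ∧ s ν = 2 ∧
      (Finset.univ.filter fun j : Fin (s ν) =>
        classOfPrime U s iotahat ν j = Multiplicative.ofAdd e).card = 2 then 2
  else if (∀ ε : U ν, classOfUnit U s iotahat ν ε = 1) ∧ s ν = 1 then 0
  else if (∀ ε : U ν, classOfUnit U s iotahat ν ε = 1) ∧ 2 ≤ s ν ∧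
      (Finset.univ.filter fun j : Fin (s ν) =>
        classOfPrime U s iotahat ν j = Multiplicative.ofAdd e).card = 0 then -1
  else 1


/-!
All monoids involved are reduced, so factorizations may be taken in the monoid itself, where
`c(H) ≤ N` says that any two factorizations of an element are joined by a chain of steps of
distance at most `N`. Atoms of a product are atoms of one factor, so this chain condition holds
for a finite product exactly when it holds for every factor; `F(P)` is factorial, which gives
`c(F) = max c(D_i)`.

In `D` of rank `s ≥ 2` every product of three atoms has all exponents `≥ 2`, hence is a product
of two atoms; so every factorization is joined by steps of distance `≤ 3` to one of length
`≤ 2`, and `c(D) ≤ 3`. In rank one all atoms have exponent one, so for atoms `x₁, x₂, y` there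
is an atom `z` with `x₁ x₂ = y z`; replacing two atoms by a prescribed one and its partner gives
`c(D) ≤ 2`.

Finally, in a reduced cancellative monoid a step of distance `≤ 3` changes the length by at most
one (a product of at most one atom has no other factorization), so `c ≤ 3` forces every set of
lengths to be an interval.
-/

open Relation

theorem exists_isChain_iff_reflTransGen {α : Type*} {r : α → α → Prop} {p : α → Prop}
    {x y : α} :
    (∃ c : List α, c.head? = some x ∧ c.getLast? = some y ∧ (∀ w ∈ c, p w) ∧ c.IsChain r) ↔
      p x ∧ ReflTransGen (fun u v => p u ∧ p v ∧ r u v) x y := by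
  constructor
  · rintro ⟨c, hx, hy, hp, hc⟩
    have hne : c ≠ [] := by rintro rfl; simp at hx
    rw [List.head?_eq_some_head hne, Option.some_inj] at hx
    rw [List.getLast?_eq_some_getLast hne, Option.some_inj] at hy
    refine ⟨hx ▸ hp _ (List.head_mem hne), hx ▸ hy ▸ ?_⟩
    exact List.relationReflTransGen_of_exists_isChain c
      (List.IsChain.iff_mem.1 hc |>.imp fun u v h => ⟨hp u h.1, hp v h.2.1, h.2.2⟩) hne
  · rintro ⟨hx, h⟩
    obtain ⟨c, hne, hc, rfl, rfl⟩ := List.exists_isChain_ne_nil_of_relationReflTransGen h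
    exact ⟨c, List.head?_eq_some_head hne, List.getLast?_eq_some_getLast hne,
      hc.induction p c (fun _ _ h _ => h.2.1) fun _ => hx, hc.imp fun _ _ h => h.2.2⟩

theorem exists_reflTransGen_eq_of_le {α : Type*} {r : α → α → Prop} {f : α → ℕ}
    (hr : ∀ u v, r u v → f v ≤ f u + 1) {x y : α} (h : ReflTransGen r x y) {m : ℕ}
    (hx : f x ≤ m) (hy : m ≤ f y) : ∃ z, ReflTransGen r x z ∧ f z = m := by
  induction h with
  | refl => exact ⟨x, .refl, le_antisymm hx hy⟩
  | @tail b c hxb hbc ih =>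
    by_cases hm : m ≤ f b
    · exact ih hm
    · exact ⟨c, hxb.tail hbc, by have := hr _ _ hbc; omega⟩

def multisetDist {α : Type*} (W W' : Multiset α) : ℕ :=
  max (Multiset.card (W - W')) (Multiset.card (W' - W))

theorem multisetDist_comm {α : Type*} (W W' : Multiset α) :
    multisetDist W W' = multisetDist W' W :=
  max_comm _ _

theorem multisetDist_add_left {α : Type*} (R W W' : Multiset α) :
    multisetDist (R + W) (R + W') = multisetDist W W' := by
  simp only [multisetDist, add_tsub_add_eq_tsub_left]

theorem multisetDist_add_right {α : Type*} (R W W' : Multiset α) :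
    multisetDist (W + R) (W' + R) = multisetDist W W' := by
  simp only [multisetDist, add_tsub_add_eq_tsub_right]

theorem multisetDist_le_max_card {α : Type*} (W W' : Multiset α) :
    multisetDist W W' ≤ max (Multiset.card W) (Multiset.card W') :=
  max_le_max (Multiset.card_le_card (Multiset.sub_le_self _ _))
    (Multiset.card_le_card (Multiset.sub_le_self _ _))

theorem Multiset.map_sub_of_injective {α β : Type*} [DecidableEq α] [DecidableEq β] {f : α → β}
    (hf : Function.Injective f) (W W' : Multiset α) :
    (W - W').map f = W.map f - W'.map f := by
  ext b
  by_cases hb : b ∈ Set.range f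
  · obtain ⟨a, rfl⟩ := hb
    simp only [Multiset.count_sub, Multiset.count_map_eq_count' f _ hf]
  · have h : ∀ X : Multiset α, (X.map f).count b = 0 := fun X =>
      Multiset.count_eq_zero.2 fun hX => hb (by obtain ⟨a, -, rfl⟩ := Multiset.mem_map.1 hX; simp)
    simp only [Multiset.count_sub, h, tsub_self]

theorem Multiset.exists_eq_add_of_le_card {α : Type*} {W : Multiset α} {n : ℕ}
    (h : n ≤ Multiset.card W) : ∃ T V, Multiset.card T = n ∧ W = T + V := by
  obtain ⟨l, rfl⟩ : ∃ l : List α, (l : Multiset α) = W := Quot.exists_rep W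
  exact ⟨l.take n, l.drop n, by simpa using h, by rw [Multiset.coe_add, List.take_append_drop]⟩

theorem multisetDist_map {α β : Type*} {f : α → β} (hf : Function.Injective f)
    (W W' : Multiset α) : multisetDist (W.map f) (W'.map f) = multisetDist W W' := by
  simp only [multisetDist, ← Multiset.map_sub_of_injective hf, Multiset.card_map]

section Factorizations

theorem factorDist_eq_multisetDist (z z' : Multiset (Associates M)) :
    factorDist z z' = multisetDist z z' := by
  unfold factorDist multisetDist
  congr!

def atomFactorizations (a : M) : Set (Multiset M) :=
  {W | (∀ x ∈ W, Irreducible x) ∧ W.prod = a}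

def FactorizationStep (a : M) (N : ℕ∞) (W W' : Multiset M) : Prop :=
  W ∈ atomFactorizations a ∧ W' ∈ atomFactorizations a ∧ (multisetDist W W' : ℕ∞) ≤ N

/-- `c(M) ≤ N`, with factorizations taken in `M` itself rather than in `Associates M`; the two
readings agree for reduced `M` (`catenaryDegree_le_iff_catenaryLE`). -/
def CatenaryLE (M : Type*) [CommMonoid M] (N : ℕ∞) : Prop :=
  ∀ a : M, ∀ W ∈ atomFactorizations a, ∀ W' ∈ atomFactorizations a,
    ReflTransGen (FactorizationStep a N) W W'

set_option linter.deprecated false in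
theorem catenaryDegree_eq_sInf :
    catenaryDegree M = sInf {N | CatenaryLE (Associates M) N} := by
  unfold catenaryDegree CatenaryLE FactorizationStep
  simp only [List.Chain', exists_isChain_iff_reflTransGen, factorDist_eq_multisetDist,
    Associates.mk_surjective.forall]
  congr! 8 with N a z hz z' -
  exact and_iff_right hz

theorem CatenaryLE.mono {N N' : ℕ∞} (h : CatenaryLE M N) (hle : N ≤ N') : CatenaryLE M N' :=
  fun a W hW W' hW' =>
    ReflTransGen.mono (fun _ _ hs => ⟨hs.1, hs.2.1, hs.2.2.trans hle⟩) _ _ (h a W hW W' hW')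

theorem catenaryLE_top : CatenaryLE M ⊤ :=
  fun _ _ hW _ hW' => .single ⟨hW, hW', le_top⟩

theorem catenaryDegree_le_iff {N : ℕ∞} :
    catenaryDegree M ≤ N ↔ CatenaryLE (Associates M) N := by
  rw [catenaryDegree_eq_sInf]
  have hmem : sInf {N | CatenaryLE (Associates M) N} ∈ {N | CatenaryLE (Associates M) N} :=
    csInf_mem ⟨⊤, catenaryLE_top⟩
  exact ⟨hmem.mono, fun h => sInf_le h⟩

end Factorizations

section Transfer

variable {A B : Type*} [CommMonoid A] [CommMonoid B]

theorem mem_atomFactorizations_of_reflTransGen {a : A} {N : ℕ∞} {W W' : Multiset A}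
    (h : ReflTransGen (FactorizationStep a N) W W') (hW : W ∈ atomFactorizations a) :
    W' ∈ atomFactorizations a := by
  rcases h.cases_tail with rfl | ⟨_, -, hstep⟩
  exacts [hW, hstep.2.1]

theorem factorizationStep_lift {a : A} {b : B} {N : ℕ∞} (g : Multiset A → Multiset B)
    (hg : ∀ X ∈ atomFactorizations a, g X ∈ atomFactorizations b)
    (hd : ∀ X Y, multisetDist (g X) (g Y) = multisetDist X Y) {W W' : Multiset A}
    (h : ReflTransGen (FactorizationStep a N) W W') :
    ReflTransGen (FactorizationStep b N) (g W) (g W') :=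
  h.lift g fun X Y hXY => ⟨hg X hXY.1, hg Y hXY.2.1, hd X Y ▸ hXY.2.2⟩

theorem CatenaryLE.of_map {F : Type*} [FunLike F A B] [MonoidHomClass F A B] {N : ℕ∞} (f : F)
    (hf : Function.Injective f)
    (h : ∀ a, atomFactorizations (f a) = Multiset.map f '' atomFactorizations a)
    (hB : CatenaryLE B N) : CatenaryLE A N := by
  intro a U hU U' hU'
  have pullback : ∀ W, ReflTransGen (FactorizationStep (f a) N) (U.map f) W →
      ∃ V, V.map f = W ∧ ReflTransGen (FactorizationStep a N) U V := by
    intro W hW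
    induction hW with
    | refl => exact ⟨U, rfl, .refl⟩
    | tail _ hstep ih =>
      obtain ⟨V, rfl, hV⟩ := ih
      obtain ⟨V₀, hV₀, hV₀V⟩ := h a ▸ hstep.1
      obtain ⟨V', hV', rfl⟩ := h a ▸ hstep.2.1
      rw [Multiset.map_injective hf hV₀V] at hV₀
      exact ⟨V', rfl, hV.tail ⟨hV₀, hV', multisetDist_map hf V V' ▸ hstep.2.2⟩⟩
  have hmap : ∀ X ∈ atomFactorizations a, X.map f ∈ atomFactorizations (f a) := fun X hX => by
    rw [h a]; exact Set.mem_image_of_mem _ hX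
  obtain ⟨V, hV, hUV⟩ := pullback _ (hB _ _ (hmap U hU) _ (hmap U' hU'))
  rwa [← Multiset.map_injective hf hV]

theorem atomFactorizations_map_equiv (e : A ≃* B) (a : A) :
    atomFactorizations (e a) = Multiset.map e '' atomFactorizations a := by
  ext W
  constructor
  · rintro ⟨hirr, hprod⟩
    refine ⟨W.map e.symm, ⟨fun x hx => ?_, ?_⟩, by simp [Multiset.map_map]⟩
    · obtain ⟨y, hy, rfl⟩ := Multiset.mem_map.1 hx
      exact (MulEquiv.irreducible_iff e).1 (by simpa using hirr y hy)
    · rw [← map_multiset_prod, hprod, e.symm_apply_apply]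
  · rintro ⟨U, ⟨hirr, rfl⟩, rfl⟩
    refine ⟨fun x hx => ?_, (map_multiset_prod e U).symm⟩
    obtain ⟨y, hy, rfl⟩ := Multiset.mem_map.1 hx
    exact (MulEquiv.irreducible_iff e).2 (hirr y hy)

theorem catenaryLE_congr (e : A ≃* B) {N : ℕ∞} : CatenaryLE A N ↔ CatenaryLE B N :=
  ⟨.of_map e.symm e.symm.injective (atomFactorizations_map_equiv e.symm),
    .of_map e e.injective (atomFactorizations_map_equiv e)⟩

end Transfer

section Reduced

variable [Subsingleton Mˣ]

variable (M) in
def associatesMulEquiv : M ≃* Associates M :=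
  .ofBijective Associates.mkMonoidHom ⟨Associates.mk_injective, Associates.mk_surjective⟩

theorem catenaryDegree_le_iff_catenaryLE {N : ℕ∞} : catenaryDegree M ≤ N ↔ CatenaryLE M N := by
  rw [catenaryDegree_le_iff, catenaryLE_congr (associatesMulEquiv M)]

theorem lengthSet_eq_image_card (a : M) :
    lengthSet a = Multiset.card '' atomFactorizations a := by
  change Multiset.card '' atomFactorizations (associatesMulEquiv M a) = _
  rw [atomFactorizations_map_equiv, Set.image_image]
  simp only [Multiset.card_map]

end Reduced

section Atoms

theorem FactorizationStep.symm {a : M} {N : ℕ∞} {W W' : Multiset M}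
    (h : FactorizationStep a N W W') : FactorizationStep a N W' W :=
  ⟨h.2.1, h.1, multisetDist_comm W W' ▸ h.2.2⟩

theorem cons_mem_atomFactorizations {x b : M} {W : Multiset M} (hx : Irreducible x)
    (hW : W ∈ atomFactorizations b) : x ::ₘ W ∈ atomFactorizations (x * b) :=
  ⟨Multiset.forall_mem_cons.2 ⟨hx, hW.1⟩, by rw [Multiset.prod_cons, hW.2]⟩

theorem eq_zero_of_prod_eq_one {W : Multiset M} (hW : ∀ x ∈ W, Irreducible x)
    (h : W.prod = 1) : W = 0 :=
  Multiset.eq_zero_of_forall_notMem fun x hx =>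
    (hW x hx).not_isUnit (isUnit_of_dvd_one (h ▸ Multiset.dvd_prod hx))

theorem atomFactorizations_one : atomFactorizations (1 : M) = {0} := by
  ext W
  refine ⟨fun hW => eq_zero_of_prod_eq_one hW.1 hW.2, ?_⟩
  rintro rfl
  exact ⟨by simp, Multiset.prod_zero⟩

variable [Subsingleton Mˣ]

theorem eq_of_prod_eq_of_card_le_one {W W' : Multiset M} (hW : ∀ x ∈ W, Irreducible x)
    (hW' : ∀ x ∈ W', Irreducible x) (h : W.prod = W'.prod) (h' : Multiset.card W' ≤ 1) :
    W = W' := by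
  rcases Nat.le_one_iff_eq_zero_or_eq_one.1 h' with h0 | h1
  · rw [Multiset.card_eq_zero.1 h0] at h ⊢
    rw [Multiset.prod_zero] at h
    exact eq_zero_of_prod_eq_one hW h
  obtain ⟨y, rfl⟩ := Multiset.card_eq_one.1 h1
  rw [Multiset.prod_singleton] at h
  have hy := hW' y (Multiset.mem_singleton_self y)
  rcases W.empty_or_exists_mem with rfl | ⟨x, hx⟩
  · exact absurd (h ▸ Multiset.prod_zero) hy.ne_one
  obtain ⟨V, rfl⟩ := Multiset.exists_cons_of_mem hx
  rw [Multiset.prod_cons] at h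
  rcases (h ▸ hy).eq_one_or_eq_one with h1 | h1
  · exact absurd h1 (hW x hx).ne_one
  · rw [eq_zero_of_prod_eq_one (fun z hz => hW z (Multiset.mem_cons_of_mem hz)) h1] at h ⊢
    rw [← h, Multiset.prod_zero, mul_one, Multiset.cons_zero]

variable [IsCancelMul M]

theorem card_le_card_add_one_of_factorizationStep {a : M} {W W' : Multiset M}
    (h : FactorizationStep a 3 W W') : Multiset.card W' ≤ Multiset.card W + 1 := by
  obtain ⟨⟨hW, hWa⟩, ⟨hW', hW'a⟩, hd⟩ := h
  have hd : multisetDist W W' ≤ 3 := by exact_mod_cast hd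
  have hsplit := Multiset.sub_add_inter W W'
  have hsplit' := Multiset.sub_add_inter W' W
  rw [Multiset.inter_comm] at hsplit'
  have hprod : (W' - W).prod = (W - W').prod := by
    apply mul_right_cancel (b := (W ∩ W').prod)
    rw [← Multiset.prod_add, ← Multiset.prod_add, hsplit, hsplit', hWa, hW'a]
  have hcard := congrArg Multiset.card hsplit
  have hcard' := congrArg Multiset.card hsplit'
  rw [Multiset.card_add] at hcard hcard'
  -- After cancelling `W ∩ W'` both remainders have the same product, and a product of at most
  -- one atom has a unique factorization.
  by_cases hsmall : Multiset.card (W - W') ≤ 1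
  · have := eq_of_prod_eq_of_card_le_one
      (fun x hx => hW' x (Multiset.mem_of_le (Multiset.sub_le_self _ _) hx))
      (fun x hx => hW x (Multiset.mem_of_le (Multiset.sub_le_self _ _) hx)) hprod hsmall
    rw [this] at hcard'
    omega
  · have := le_max_right (Multiset.card (W - W')) (Multiset.card (W' - W))
    unfold multisetDist at hd
    omega

theorem deltaSet_image_card_subset_one (h : CatenaryLE M 3) (a : M) :
    DeltaSet (Multiset.card '' atomFactorizations a) ⊆ {1} := by
  rintro d ⟨k, l, ⟨W, hW, rfl⟩, ⟨W', hW', rfl⟩, hlt, hgap, rfl⟩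
  obtain ⟨Z, hWZ, hZ⟩ := exists_reflTransGen_eq_of_le (f := Multiset.card)
    (r := FactorizationStep a 3) (fun _ _ => card_le_card_add_one_of_factorizationStep)
    (h a W hW W' hW') (m := Multiset.card W + 1) le_self_add hlt
  by_contra hne
  exact hgap _ (lt_add_one _) (by simp only [Set.mem_singleton_iff] at hne; omega)
    ⟨Z, mem_atomFactorizations_of_reflTransGen hWZ hW, hZ⟩

theorem deltaMonoid_subset_one_of_catenaryDegree_le_three (h : catenaryDegree M ≤ 3) :
    DeltaMonoid M ⊆ {1} :=
  Set.iUnion_subset fun a => lengthSet_eq_image_card a ▸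
    deltaSet_image_card_subset_one (catenaryDegree_le_iff_catenaryLE.1 h) a

end Atoms

section Criteria

theorem exists_card_le_two_of_forall_exists_mul_eq
    (h : ∀ x₁ x₂ x₃ : M, Irreducible x₁ → Irreducible x₂ → Irreducible x₃ →
      ∃ y₁ y₂, Irreducible y₁ ∧ Irreducible y₂ ∧ y₁ * y₂ = x₁ * x₂ * x₃)
    {a : M} {W : Multiset M} (hW : W ∈ atomFactorizations a) :
    ∃ W₂ ∈ atomFactorizations a, Multiset.card W₂ ≤ 2 ∧
      ReflTransGen (FactorizationStep a 3) W W₂ := by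
  induction hn : Multiset.card W using Nat.strong_induction_on generalizing W with
  | _ n ih =>
    by_cases h2 : n ≤ 2
    · exact ⟨W, hW, hn ▸ h2, .refl⟩
    obtain ⟨T, V, hT, rfl⟩ := Multiset.exists_eq_add_of_le_card (W := W) (n := 3) (by omega)
    obtain ⟨x₁, x₂, x₃, rfl⟩ := Multiset.card_eq_three.1 hT
    have hx : ∀ x ∈ ({x₁, x₂, x₃} : Multiset M), Irreducible x :=
      fun x hx => hW.1 x (Multiset.mem_add.2 (Or.inl hx))
    obtain ⟨y₁, y₂, hy₁, hy₂, hy⟩ := h x₁ x₂ x₃ (hx _ (by simp)) (hx _ (by simp)) (hx _ (by simp))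
    have hW' : {y₁, y₂} + V ∈ atomFactorizations a := by
      refine ⟨?_, ?_⟩
      · simp only [Multiset.insert_eq_cons, Multiset.mem_add, Multiset.mem_cons,
          Multiset.mem_singleton]
        rintro x ((rfl | rfl) | hx)
        exacts [hy₁, hy₂, hW.1 x (Multiset.mem_add.2 (Or.inr hx))]
      · rw [← hW.2]
        simp only [Multiset.prod_add, Multiset.insert_eq_cons, Multiset.prod_cons,
          Multiset.prod_singleton, hy, mul_assoc]
    have hd : multisetDist ({x₁, x₂, x₃} + V) ({y₁, y₂} + V) ≤ 3 := by
      rw [multisetDist_add_right]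
      exact (multisetDist_le_max_card _ _).trans (by simp)
    obtain ⟨W₂, hW₂, hc, hr⟩ := ih (n - 1) (by omega) hW' (by simp at hn ⊢; omega)
    exact ⟨W₂, hW₂, hc, .head ⟨hW, hW', by exact_mod_cast hd⟩ hr⟩

theorem catenaryLE_three_of_forall_exists_mul_eq
    (h : ∀ x₁ x₂ x₃ : M, Irreducible x₁ → Irreducible x₂ → Irreducible x₃ →
      ∃ y₁ y₂, Irreducible y₁ ∧ Irreducible y₂ ∧ y₁ * y₂ = x₁ * x₂ * x₃) :
    CatenaryLE M 3 := by
  intro a W hW W' hW'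
  obtain ⟨W₂, hW₂, hc, hr⟩ := exists_card_le_two_of_forall_exists_mul_eq h hW
  obtain ⟨W₂', hW₂', hc', hr'⟩ := exists_card_le_two_of_forall_exists_mul_eq h hW'
  have hd : multisetDist W₂ W₂' ≤ 3 := (multisetDist_le_max_card _ _).trans (by omega)
  exact (hr.tail ⟨hW₂, hW₂', by exact_mod_cast hd⟩).trans
    (ReflTransGen.mono (fun _ _ => FactorizationStep.symm) _ _ hr'.swap)

variable [Subsingleton Mˣ] [IsCancelMul M]

theorem exists_reflTransGen_cons_of_forall_exists_mul_eq
    (h : ∀ x₁ x₂ y : M, Irreducible x₁ → Irreducible x₂ → Irreducible y →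
      ∃ z, Irreducible z ∧ x₁ * x₂ = y * z)
    {y : M} {W Y : Multiset M} (hy : Irreducible y) (hY : ∀ x ∈ Y, Irreducible x)
    (hW : W ∈ atomFactorizations (y * Y.prod)) :
    ∃ X ∈ atomFactorizations Y.prod,
      ReflTransGen (FactorizationStep (y * Y.prod) 2) W (y ::ₘ X) := by
  by_cases hyW : y ∈ W
  · obtain ⟨X, rfl⟩ := Multiset.exists_cons_of_mem hyW
    refine ⟨X, ⟨fun x hx => hW.1 x (Multiset.mem_cons_of_mem hx), ?_⟩, .refl⟩
    exact mul_left_cancel (hW.2.symm ▸ Multiset.prod_cons y X).symm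
  have h2 : 2 ≤ Multiset.card W := by
    by_contra! h1
    have := eq_of_prod_eq_of_card_le_one (W := y ::ₘ Y) (by simpa [hy] using hY) hW.1
      (by rw [hW.2, Multiset.prod_cons]) (by omega)
    exact hyW (this ▸ Multiset.mem_cons_self y Y)
  obtain ⟨T, V, hT, rfl⟩ := Multiset.exists_eq_add_of_le_card h2
  obtain ⟨x₁, x₂, rfl⟩ := Multiset.card_eq_two.1 hT
  have hx : ∀ x ∈ ({x₁, x₂} : Multiset M), Irreducible x :=
    fun x hx => hW.1 x (Multiset.mem_add.2 (Or.inl hx))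
  have hV : ∀ x ∈ V, Irreducible x := fun x hx => hW.1 x (Multiset.mem_add.2 (Or.inr hx))
  obtain ⟨z, hz, hxz⟩ := h x₁ x₂ y (hx _ (by simp)) (hx _ (by simp)) hy
  have hprod : y * (z * V.prod) = y * Y.prod := by
    rw [← mul_assoc, ← hxz, ← hW.2]
    simp [mul_assoc]
  refine ⟨z ::ₘ V, ⟨Multiset.forall_mem_cons.2 ⟨hz, hV⟩, ?_⟩, .single ⟨hW, ?_, ?_⟩⟩
  · rw [Multiset.prod_cons]; exact mul_left_cancel hprod
  · refine ⟨Multiset.forall_mem_cons.2 ⟨hy, Multiset.forall_mem_cons.2 ⟨hz, hV⟩⟩, ?_⟩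
    rw [Multiset.prod_cons, Multiset.prod_cons, hprod]
  · have : y ::ₘ z ::ₘ V = {y, z} + V := by simp
    rw [this, multisetDist_add_right]
    exact_mod_cast (multisetDist_le_max_card _ _).trans (by simp)

theorem catenaryLE_two_of_forall_exists_mul_eq
    (h : ∀ x₁ x₂ y : M, Irreducible x₁ → Irreducible x₂ → Irreducible y →
      ∃ z, Irreducible z ∧ x₁ * x₂ = y * z) :
    CatenaryLE M 2 := by
  intro a W hW W' hW'
  induction W' using Multiset.induction_on generalizing a W with
  | empty =>
    obtain rfl := eq_of_prod_eq_of_card_le_one hW.1 hW'.1 (hW.2.trans hW'.2.symm) (by simp)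
    exact .refl
  | cons y Y ih =>
    obtain ⟨hirr, rfl⟩ := hW'
    obtain ⟨hy, hY⟩ := Multiset.forall_mem_cons.1 hirr
    rw [Multiset.prod_cons] at hW ⊢
    obtain ⟨X, hX, hWX⟩ := exists_reflTransGen_cons_of_forall_exists_mul_eq h hy hY hW
    refine hWX.trans (factorizationStep_lift (y ::ₘ ·)
      (fun X hX => cons_mem_atomFactorizations hy hX) (fun X X' => ?_) (ih _ X hX ⟨hY, rfl⟩))
    simpa using multisetDist_add_left {y} X X'

end Criteria

section Prod

variable {A B : Type*} [CommMonoid A] [CommMonoid B]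

theorem irreducible_inl_iff [Subsingleton Bˣ] {x : A} :
    Irreducible (MonoidHom.inl A B x) ↔ Irreducible x := by
  have hunit : ∀ y : A, IsUnit (MonoidHom.inl A B y) ↔ IsUnit y := by simp [Prod.isUnit_iff]
  refine ⟨fun h => ⟨(hunit x).not.1 h.not_isUnit, fun a b hab => ?_⟩,
    fun h => ⟨(hunit x).not.2 h.not_isUnit, ?_⟩⟩
  · simpa only [hunit] using h.isUnit_or_isUnit (a := MonoidHom.inl A B a)
      (b := MonoidHom.inl A B b) (by rw [← map_mul, hab])
  · rintro ⟨a₁, a₂⟩ ⟨b₁, b₂⟩ hab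
    obtain ⟨hx, h1⟩ := Prod.mk.inj hab
    obtain ⟨rfl, rfl⟩ := mul_eq_one.1 h1.symm
    simpa only [← MonoidHom.inl_apply, hunit] using h.isUnit_or_isUnit hx

theorem irreducible_inr_iff [Subsingleton Aˣ] {y : B} :
    Irreducible (MonoidHom.inr A B y) ↔ Irreducible y :=
  (MulEquiv.irreducible_iff (MulEquiv.prodComm (M := A) (N := B))).symm.trans irreducible_inl_iff

variable [Subsingleton Aˣ] [Subsingleton Bˣ]

theorem exists_eq_map_inl_add_map_inr {W : Multiset (A × B)} (hW : ∀ w ∈ W, Irreducible w) :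
    ∃ (U : Multiset A) (V : Multiset B), (∀ x ∈ U, Irreducible x) ∧ (∀ y ∈ V, Irreducible y) ∧
      W = U.map (MonoidHom.inl A B) + V.map (MonoidHom.inr A B) := by
  induction W using Multiset.induction_on with
  | empty => exact ⟨0, 0, by simp, by simp, by simp⟩
  | cons w W ih =>
    obtain ⟨w₁, w₂⟩ := w
    rw [Multiset.forall_mem_cons] at hW
    obtain ⟨U, V, hU, hV, rfl⟩ := ih hW.2
    have hw : Irreducible ((w₁, 1) * (1, w₂) : A × B) := by simpa using hW.1
    rcases hw.eq_one_or_eq_one with h | h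
    · obtain rfl : w₁ = 1 := congrArg Prod.fst h
      refine ⟨U, w₂ ::ₘ V, hU, Multiset.forall_mem_cons.2 ⟨irreducible_inr_iff.1 hW.1, hV⟩, ?_⟩
      simp [Multiset.add_cons]
    · obtain rfl : w₂ = 1 := congrArg Prod.snd h
      refine ⟨w₁ ::ₘ U, V, Multiset.forall_mem_cons.2 ⟨irreducible_inl_iff.1 hW.1, hU⟩, hV, ?_⟩
      simp [Multiset.cons_add]

theorem atomFactorizations_prod (a : A) (b : B) :
    atomFactorizations (a, b) =
      Set.image2 (fun (U : Multiset A) (V : Multiset B) =>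
        U.map (MonoidHom.inl A B) + V.map (MonoidHom.inr A B))
        (atomFactorizations a) (atomFactorizations b) := by
  have prod_eq : ∀ (U : Multiset A) (V : Multiset B),
      (U.map (MonoidHom.inl A B) + V.map (MonoidHom.inr A B)).prod = (U.prod, V.prod) := by
    intro U V
    rw [Multiset.prod_add, ← map_multiset_prod, ← map_multiset_prod]
    simp
  ext W
  constructor
  · rintro ⟨hW, hprod⟩
    obtain ⟨U, V, hU, hV, rfl⟩ := exists_eq_map_inl_add_map_inr hW
    obtain ⟨hUa, hVb⟩ := Prod.mk.inj ((prod_eq U V).symm.trans hprod)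
    exact ⟨U, ⟨hU, hUa⟩, V, ⟨hV, hVb⟩, rfl⟩
  · rintro ⟨U, ⟨hU, rfl⟩, V, ⟨hV, rfl⟩, rfl⟩
    refine ⟨fun w hw => ?_, prod_eq U V⟩
    rcases Multiset.mem_add.1 hw with hw | hw
    · obtain ⟨x, hx, rfl⟩ := Multiset.mem_map.1 hw
      exact irreducible_inl_iff.2 (hU x hx)
    · obtain ⟨y, hy, rfl⟩ := Multiset.mem_map.1 hw
      exact irreducible_inr_iff.2 (hV y hy)

theorem catenaryLE_prod_iff {N : ℕ∞} :
    CatenaryLE (A × B) N ↔ CatenaryLE A N ∧ CatenaryLE B N := by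
  have hinl : Function.Injective (MonoidHom.inl A B) := Prod.mk_left_injective 1
  have hinr : Function.Injective (MonoidHom.inr A B) := Prod.mk_right_injective 1
  refine ⟨fun h => ⟨h.of_map (MonoidHom.inl A B) hinl fun a => ?_,
    h.of_map (MonoidHom.inr A B) hinr fun b => ?_⟩, ?_⟩
  · simp [atomFactorizations_prod, atomFactorizations_one, Set.image2_singleton_right]
  · simp [atomFactorizations_prod, atomFactorizations_one, Set.image2_singleton_left]
  rintro ⟨hA, hB⟩ ⟨a, b⟩ W hW W' hW'
  rw [atomFactorizations_prod] at hW hW'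
  obtain ⟨U, hU, V, hV, rfl⟩ := hW
  obtain ⟨U', hU', V', hV', rfl⟩ := hW'
  refine (factorizationStep_lift (fun X => X.map (MonoidHom.inl A B) + V.map (MonoidHom.inr A B))
    (fun X hX => ?_) (fun X Y => ?_) (hA a U hU U' hU')).trans
    (factorizationStep_lift (fun Y => U'.map (MonoidHom.inl A B) + Y.map (MonoidHom.inr A B))
    (fun Y hY => ?_) (fun X Y => ?_) (hB b V hV V' hV'))
  · rw [atomFactorizations_prod]; exact Set.mem_image2_of_mem hX hV
  · rw [multisetDist_add_right]; exact multisetDist_map hinl X Y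
  · rw [atomFactorizations_prod]; exact Set.mem_image2_of_mem hU' hY
  · rw [multisetDist_add_left]; exact multisetDist_map hinr X Y

theorem catenaryDegree_prod :
    catenaryDegree (A × B) = max (catenaryDegree A) (catenaryDegree B) :=
  eq_of_forall_ge_iff fun N => by
    simp only [max_le_iff, catenaryDegree_le_iff_catenaryLE, catenaryLE_prod_iff]

end Prod

section Pi

theorem catenaryLE_of_subsingleton {M : Type*} [CommMonoid M] [Subsingleton M] {N : ℕ∞} :
    CatenaryLE M N := by
  have h : ∀ a : M, ∀ W ∈ atomFactorizations a, W = 0 := fun a W hW =>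
    Multiset.eq_zero_of_forall_notMem fun x hx =>
      (Subsingleton.elim x 1 ▸ hW.1 x hx).ne_one rfl
  intro a W hW W' hW'
  rw [h a W hW, h a W' hW']

def Fin.consMulEquiv {n : ℕ} (G : Fin (n + 1) → Type*) [∀ i, Monoid (G i)] :
    G 0 × (∀ i : Fin n, G i.succ) ≃* ∀ i, G i :=
  .mk' (Fin.consEquiv G) fun x y => by
    ext i
    cases i using Fin.cases <;> rfl

theorem catenaryLE_pi_iff {n : ℕ} {G : Fin n → Type*} [∀ i, CommMonoid (G i)]
    [∀ i, Subsingleton (G i)ˣ] {N : ℕ∞} :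
    CatenaryLE (∀ i, G i) N ↔ ∀ i, CatenaryLE (G i) N := by
  induction n with
  | zero => exact ⟨fun _ i => i.elim0, fun _ => catenaryLE_of_subsingleton⟩
  | succ n ih =>
    rw [← catenaryLE_congr (Fin.consMulEquiv G), catenaryLE_prod_iff, ih, Fin.forall_fin_succ]

theorem catenaryDegree_pi {n : ℕ} (G : Fin n → Type*) [∀ i, CommMonoid (G i)]
    [∀ i, Subsingleton (G i)ˣ] :
    catenaryDegree (∀ i, G i) = ⨆ i, catenaryDegree (G i) :=
  eq_of_forall_ge_iff fun N => by
    simp only [iSup_le_iff, catenaryDegree_le_iff_catenaryLE, catenaryLE_pi_iff]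

end Pi

namespace FreeCM

variable {P : Type*}

theorem exists_toAdd_eq_singleton_of_irreducible {x : FreeCM P} (hx : Irreducible x) :
    ∃ p, Multiplicative.toAdd x = {p} := by
  obtain ⟨p, hp⟩ := Multiset.exists_mem_of_ne_zero (s := Multiplicative.toAdd x) hx.ne_one
  obtain ⟨t, ht⟩ := Multiset.exists_cons_of_mem hp
  have hsplit : x = Multiplicative.ofAdd {p} * Multiplicative.ofAdd t := by
    rw [← ofAdd_add, Multiset.singleton_add, ← ht]; rfl
  rcases (hsplit ▸ hx).eq_one_or_eq_one with h | h
  · exact absurd h (by simp [← ofAdd_zero])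
  · exact ⟨p, by rw [ht, ← toAdd_ofAdd t, h]; rfl⟩

theorem eq_map_of_mem_atomFactorizations {a : FreeCM P} {W : Multiset (FreeCM P)}
    (hW : W ∈ atomFactorizations a) :
    W = (Multiplicative.toAdd a).map fun p => Multiplicative.ofAdd {p} := by
  obtain ⟨hirr, rfl⟩ := hW
  induction W using Multiset.induction_on with
  | empty => rfl
  | cons x W ih =>
    rw [Multiset.forall_mem_cons] at hirr
    obtain ⟨p, hp⟩ := exists_toAdd_eq_singleton_of_irreducible hirr.1
    rw [Multiset.prod_cons, toAdd_mul, hp, Multiset.singleton_add, Multiset.map_cons,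
      ← ih hirr.2, ← hp, ofAdd_toAdd]

theorem catenaryDegree_eq_zero : catenaryDegree (FreeCM P) = 0 := by
  refine nonpos_iff_eq_zero.1 (catenaryDegree_le_iff_catenaryLE.2 fun a W hW W' hW' => ?_)
  rw [eq_map_of_mem_atomFactorizations hW, eq_map_of_mem_atomFactorizations hW']

end FreeCM

@[simp] theorem allOnes_apply (s : ℕ) (j : Fin s) : allOnes s j = 1 := rfl

namespace seminormalD

variable {U : Type*} [CommGroup U] {s : ℕ}

def unit (x : seminormalD U s) : U := (x : U × Multiplicative (Fin s →₀ ℕ)).1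

def exponent (x : seminormalD U s) : Fin s →₀ ℕ :=
  Multiplicative.toAdd (x : U × Multiplicative (Fin s →₀ ℕ)).2

def mk (ε : U) (v : Fin s →₀ ℕ) (hv : ∀ j, 1 ≤ v j) : seminormalD U s :=
  ⟨(ε, Multiplicative.ofAdd v), Or.inr hv⟩

@[simp] theorem unit_mk (ε : U) (v : Fin s →₀ ℕ) (hv : ∀ j, 1 ≤ v j) : unit (mk ε v hv) = ε := rfl

@[simp] theorem exponent_mk (ε : U) (v : Fin s →₀ ℕ) (hv : ∀ j, 1 ≤ v j) :
    exponent (mk ε v hv) = v := rfl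

@[simp] theorem unit_mul (x y : seminormalD U s) : unit (x * y) = unit x * unit y := rfl

@[simp] theorem exponent_mul (x y : seminormalD U s) :
    exponent (x * y) = exponent x + exponent y := rfl

@[simp] theorem exponent_one : exponent (1 : seminormalD U s) = 0 := rfl

theorem ext {x y : seminormalD U s} (h₁ : unit x = unit y) (h₂ : exponent x = exponent y) :
    x = y :=
  Subtype.ext (Prod.ext h₁ (congrArg Multiplicative.ofAdd h₂))

theorem one_le_exponent {x : seminormalD U s} (hx : x ≠ 1) (j : Fin s) : 1 ≤ exponent x j := by
  rcases x.2 with h | h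
  exacts [absurd (Subtype.ext h) hx, h j]

theorem eq_one_of_exponent_eq_zero [NeZero s] {x : seminormalD U s} (h : exponent x 0 = 0) :
    x = 1 := by
  by_contra hx
  have := one_le_exponent hx 0
  omega

instance [NeZero s] : Subsingleton (seminormalD U s)ˣ :=
  .units_of_isUnit fun x hx => by
    obtain ⟨y, hxy⟩ := hx.exists_right_inv
    have := congrArg (fun z => exponent z 0) hxy
    simp only [exponent_mul, exponent_one, Finsupp.add_apply, Finsupp.coe_zero, Pi.zero_apply,
      Nat.add_eq_zero_iff] at this
    exact eq_one_of_exponent_eq_zero this.1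

theorem ne_one_of_exponent_pos {x : seminormalD U s} {j : Fin s} (h : 0 < exponent x j) :
    x ≠ 1 := by
  rintro rfl
  simp at h

theorem irreducible_iff [NeZero s] {x : seminormalD U s} :
    Irreducible x ↔ ∃ j, exponent x j = 1 := by
  constructor
  · intro hx
    by_contra! h
    have h2 : ∀ j, 2 ≤ exponent x j := fun j => by
      have := one_le_exponent hx.ne_one j; have := h j; omega
    let a : seminormalD U s := mk (unit x) (exponent x - allOnes s) fun j => by
      have := h2 j; simp; omega
    let b : seminormalD U s := mk 1 (allOnes s) fun j => (allOnes_apply s j).ge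
    have hab : x = a * b := ext (by simp [a, b]) <| by
      ext j; have := h2 j; simp [a, b]; omega
    rcases (hab ▸ hx).eq_one_or_eq_one with h1 | h1
    · exact ne_one_of_exponent_pos (j := 0) (by have := h2 0; simp [a]; omega) h1
    · exact ne_one_of_exponent_pos (j := 0) (by simp [b]) h1
  · rintro ⟨j, hj⟩
    refine ⟨fun hu => ne_one_of_exponent_pos (hj ▸ one_pos) (isUnit_iff_eq_one.1 hu),
      fun a b hab => ?_⟩
    by_contra! h
    have := congrArg (fun z => exponent z j) hab
    have := one_le_exponent (fun ha => h.1 (isUnit_iff_eq_one.2 ha)) j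
    have := one_le_exponent (fun hb => h.2 (isUnit_iff_eq_one.2 hb)) j
    simp only [exponent_mul, Finsupp.add_apply] at *
    omega

theorem exists_irreducible_mul_eq_of_two_le (hs : 2 ≤ s) {x : seminormalD U s}
    (hx : ∀ j, 2 ≤ exponent x j) :
    ∃ a b : seminormalD U s, Irreducible a ∧ Irreducible b ∧ a * b = x := by
  have : NeZero s := ⟨by omega⟩
  let j₁ : Fin s := ⟨1, hs⟩
  have hj : j₁ ≠ 0 := Fin.ne_of_val_ne one_ne_zero
  let a : seminormalD U s := mk (unit x)
    (Finsupp.equivFunOnFinite.symm fun j => if j = 0 then 1 else exponent x j - 1) fun j => by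
      have := hx j; simp only [Finsupp.equivFunOnFinite_symm_apply_apply]; split_ifs <;> omega
  let b : seminormalD U s := mk 1
    (Finsupp.equivFunOnFinite.symm fun j => if j = 0 then exponent x 0 - 1 else 1) fun j => by
      have := hx 0; simp only [Finsupp.equivFunOnFinite_symm_apply_apply]; split_ifs <;> omega
  refine ⟨a, b, irreducible_iff.2 ⟨0, by simp [a]⟩, irreducible_iff.2 ⟨j₁, by simp [b, hj]⟩, ?_⟩
  refine ext (by simp [a, b]) (Finsupp.ext fun j => ?_)
  have := hx j
  simp only [a, b, exponent_mul, exponent_mk, Finsupp.add_apply,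
    Finsupp.equivFunOnFinite_symm_apply_apply]
  split_ifs with h <;> [subst h; skip] <;> omega

theorem catenaryLE_three_of_two_le (hs : 2 ≤ s) : CatenaryLE (seminormalD U s) 3 := by
  have : NeZero s := ⟨by omega⟩
  refine catenaryLE_three_of_forall_exists_mul_eq fun x₁ x₂ x₃ h₁ h₂ h₃ =>
    exists_irreducible_mul_eq_of_two_le hs fun j => ?_
  have := one_le_exponent h₁.ne_one j
  have := one_le_exponent h₂.ne_one j
  have := one_le_exponent h₃.ne_one j
  simp only [exponent_mul, Finsupp.add_apply]
  omega

theorem exponent_eq_one_of_irreducible {x : seminormalD U 1} (hx : Irreducible x) (j : Fin 1) :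
    exponent x j = 1 := by
  obtain ⟨j', hj'⟩ := irreducible_iff.1 hx
  rwa [Subsingleton.elim j j']

theorem catenaryLE_two_of_rank_one : CatenaryLE (seminormalD U 1) 2 := by
  refine catenaryLE_two_of_forall_exists_mul_eq fun x₁ x₂ y h₁ h₂ hy => ?_
  have h1 : ∀ {x : seminormalD U 1}, Irreducible x → ∀ j, exponent x j = 1 :=
    exponent_eq_one_of_irreducible
  refine ⟨mk ((unit y)⁻¹ * (unit x₁ * unit x₂)) (exponent y) fun j => (h1 hy j).ge,
    irreducible_iff.2 ⟨0, h1 hy 0⟩, ext (by simp) (Finsupp.ext fun j => ?_)⟩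
  simp [h1 h₁, h1 h₂, h1 hy]

theorem catenaryDegree_le_three [NeZero s] : catenaryDegree (seminormalD U s) ≤ 3 := by
  rw [catenaryDegree_le_iff_catenaryLE]
  rcases (show s = 1 ∨ 2 ≤ s by have := NeZero.ne s; omega) with rfl | hs
  · exact catenaryLE_two_of_rank_one.mono (by norm_num)
  · exact catenaryLE_three_of_two_le hs

end seminormalD

/-- Step 2 in the proof of Theorem 1.1: for `F = F(P) × D_1 × ⋯ × D_n` with each `D_i`
reduced seminormal finitely primary, `c(F) = max{c(D_1), …, c(D_n)} ≤ 3` and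
consequently `Δ(F) ⊆ {1}`. -/
theorem catenary_degree_of_product_with_free
    {P : Type*} {n : ℕ} (U : Fin n → Type*) [∀ i, CommGroup (U i)]
    (s : Fin n → ℕ) (hs : ∀ i, 1 ≤ s i) :
    catenaryDegree (FreeCM P × ∀ i, ↥(seminormalD (U i) (s i))) =
      (⨆ i, catenaryDegree ↥(seminormalD (U i) (s i))) ∧
    (⨆ i, catenaryDegree ↥(seminormalD (U i) (s i))) ≤ 3 ∧
    DeltaMonoid (FreeCM P × ∀ i, ↥(seminormalD (U i) (s i))) ⊆ {1} := by
  have : ∀ i, NeZero (s i) := fun i => ⟨Nat.one_le_iff_ne_zero.1 (hs i)⟩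
  have hD : (⨆ i, catenaryDegree (seminormalD (U i) (s i))) ≤ 3 :=
    iSup_le fun i => seminormalD.catenaryDegree_le_three
  have hF : catenaryDegree (FreeCM P × ∀ i, seminormalD (U i) (s i)) =
      ⨆ i, catenaryDegree (seminormalD (U i) (s i)) := by
    rw [catenaryDegree_prod, FreeCM.catenaryDegree_eq_zero, catenaryDegree_pi, zero_max]
  exact ⟨hF, hD, deltaMonoid_subset_one_of_catenaryDegree_le_three (hF ▸ hD)⟩

end
end ArXivSeminormal
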